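/- In the static team problem, suppose that for P-a.e. ω the map u ↦ L(u, ω) is (jointly) convex and differentiable on A^1 × … × A^N, that every admissible strategy profile has P-integrable cost, that J(γ^o) < ∞, that ω ↦ ∇_u L(γ^o(ω), ω) is P-integrable, and that for every admissible γ the map ω ↦ Σ_i ⟨∇_{u^i} L(γ^o(ω), ω), γ^i(ω) − γ^{i,o}(ω)⟩ is P-integrable. If γ^o is person-by-person optimal, i.e. for every i and every G^i-measurable γ^i : Ω → A^i one has J(γ^{1,o}, …, γ^{i−1,o}, γ^i, γ^{i+1,o}, …, γ^{N,o}) ≥ J(γ^o), then γ^o is team optimal: J(γ^o) ≤ J(γ) for every admissible strategy profile γ. -/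

import Mathlib

/-
Every point of the segment from `γᵒ` to the unilateral deviation `(γᵒ⁻ⁱ, γⁱ)` is again a
unilateral deviation (`Aⁱ` is convex), so person-by-person optimality keeps the expected cost
along it at least `J(γᵒ)`. For a convex cost the difference quotients along the segment are
squeezed between the directional derivative `⟪∇_{uⁱ} L(γᵒ), γⁱ - γⁱᵒ⟫` and the total increment,
so dominated convergence gives `E ⟪∇_{uⁱ} L(γᵒ), γⁱ - γⁱᵒ⟫ ≥ 0` for every decision maker.
Summing over `i` gives `E ⟪∇_u L(γᵒ), γ - γᵒ⟫ ≥ 0`, and the gradient inequality of the jointly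
convex cost bounds this by `J(γ) - J(γᵒ)`.
-/

open MeasureTheory Filter Topology Set AffineMap
open scoped RealInnerProductSpace

/-- The product σ-algebra on `PiLp 2` (which is by definition the product type). -/
instance piLpMeasurableSpace {ι : Type*} {p : ENNReal} (E : ι → Type*)
    [∀ i, MeasurableSpace (E i)] : MeasurableSpace (PiLp p E) :=
  MeasurableSpace.comap WithLp.ofLp MeasurableSpace.pi

section FirstOrder

variable {E : Type*} [NormedAddCommGroup E] [InnerProductSpace ℝ E] {f : E → ℝ} {S : Set E}
  {x y g : E}

theorem ConvexOn.comp_lineMap_Icc (hf : ConvexOn ℝ S f) (hx : x ∈ S) (hy : y ∈ S) :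
    ConvexOn ℝ (Icc (0 : ℝ) 1) (f ∘ lineMap x y) :=
  (hf.comp_affineMap (lineMap x y)).subset (hf.1.mapsTo_lineMap hx hy) (convex_Icc 0 1)

theorem ConvexOn.slope_comp_lineMap_le (hf : ConvexOn ℝ S f) (hx : x ∈ S) (hy : y ∈ S) {t : ℝ}
    (ht : t ∈ Ioc 0 1) : slope (f ∘ lineMap x y) 0 t ≤ f y - f x := by
  have := (hf.comp_lineMap_Icc hx hy).slope_mono (left_mem_Icc.2 zero_le_one)
    ⟨Ioc_subset_Icc_self ht, ht.1.ne'⟩ ⟨right_mem_Icc.2 zero_le_one, one_ne_zero⟩ ht.2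
  simpa [slope_def_field] using this

variable [CompleteSpace E]

theorem HasGradientWithinAt.hasDerivWithinAt_comp_lineMap (hg : HasGradientWithinAt f g S x)
    (hxy : MapsTo (lineMap x y) (Icc (0 : ℝ) 1) S) :
    HasDerivWithinAt (f ∘ lineMap x y) ⟪g, y - x⟫ (Icc (0 : ℝ) 1) 0 := by
  have hline : HasDerivWithinAt (lineMap x y : ℝ → E) (y - x) (Icc 0 1) 0 :=
    AffineMap.hasDerivAt_lineMap.hasDerivWithinAt
  simpa using (lineMap_apply_zero x y (k := ℝ) ▸ hg.hasFDerivWithinAt).comp_hasDerivWithinAt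
    (0 : ℝ) hline hxy

theorem HasGradientWithinAt.tendsto_slope_comp_lineMap (hg : HasGradientWithinAt f g S x)
    (hxy : MapsTo (lineMap x y) (Icc (0 : ℝ) 1) S) :
    Tendsto (slope (f ∘ lineMap x y) (0 : ℝ)) (𝓝[>] 0) (𝓝 ⟪g, y - x⟫) := by
  refine (hasDerivWithinAt_iff_tendsto_slope.mp
    (HasGradientWithinAt.hasDerivWithinAt_comp_lineMap hg hxy)).mono_left ?_
  rw [← nhdsWithin_Ioc_eq_nhdsGT zero_lt_one]
  exact nhdsWithin_mono _ fun t ht => ⟨Ioc_subset_Icc_self ht, ht.1.ne'⟩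

theorem ConvexOn.inner_le_slope_comp_lineMap (hf : ConvexOn ℝ S f)
    (hg : HasGradientWithinAt f g S x) (hx : x ∈ S) (hy : y ∈ S) {t : ℝ} (ht : t ∈ Ioc 0 1) :
    ⟪g, y - x⟫ ≤ slope (f ∘ lineMap x y) 0 t :=
  (hf.comp_lineMap_Icc hx hy).le_slope_of_hasDerivWithinAt (left_mem_Icc.2 zero_le_one)
    (Ioc_subset_Icc_self ht) ht.1
    (HasGradientWithinAt.hasDerivWithinAt_comp_lineMap hg (hf.1.mapsTo_lineMap hx hy))

theorem ConvexOn.inner_le_sub (hf : ConvexOn ℝ S f) (hg : HasGradientWithinAt f g S x)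
    (hx : x ∈ S) (hy : y ∈ S) : ⟪g, y - x⟫ ≤ f y - f x :=
  (hf.inner_le_slope_comp_lineMap hg hx hy (right_mem_Ioc.2 zero_lt_one)).trans
    (hf.slope_comp_lineMap_le hx hy (right_mem_Ioc.2 zero_lt_one))

end FirstOrder

section Expectation

variable {Ω E : Type*} [MeasurableSpace Ω] {P : Measure Ω} [NormedAddCommGroup E]
  [InnerProductSpace ℝ E] [CompleteSpace E] {F : E → Ω → ℝ} {S : Set E} {X Y g : Ω → E}

theorem integral_inner_nonneg_of_integral_le_integral_lineMap
    (hF : ∀ᵐ ω ∂P, ConvexOn ℝ S (F · ω) ∧ HasGradientWithinAt (F · ω) (g ω) S (X ω))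
    (hX : ∀ᵐ ω ∂P, X ω ∈ S) (hY : ∀ᵐ ω ∂P, Y ω ∈ S)
    (hint : ∀ t ∈ Icc (0 : ℝ) 1, Integrable (fun ω => F (lineMap (X ω) (Y ω) t) ω) P)
    (hmin : ∀ t ∈ Ioc (0 : ℝ) 1, ∫ ω, F (X ω) ω ∂P ≤ ∫ ω, F (lineMap (X ω) (Y ω) t) ω ∂P)
    (hg : Integrable (fun ω => ⟪g ω, Y ω - X ω⟫) P) :
    0 ≤ ∫ ω, ⟪g ω, Y ω - X ω⟫ ∂P := by
  have hIoc : ∀ᶠ t in 𝓝[>] (0 : ℝ), t ∈ Ioc 0 1 := Ioc_mem_nhdsGT zero_lt_one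
  have hX_int : Integrable (fun ω => F (X ω) ω) P := by
    simpa using hint 0 (left_mem_Icc.2 zero_le_one)
  have hY_int : Integrable (fun ω => F (Y ω) ω) P := by
    simpa using hint 1 (right_mem_Icc.2 zero_le_one)
  have hslope_int (t : ℝ) (ht : t ∈ Ioc 0 1) :
      Integrable (fun ω => slope ((F · ω) ∘ lineMap (X ω) (Y ω)) 0 t) P := by
    simpa [slope_def_field, div_eq_inv_mul] using
      ((hint t (Ioc_subset_Icc_self ht)).sub hX_int).const_mul t⁻¹
  have hslope_nonneg (t : ℝ) (ht : t ∈ Ioc 0 1) :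
      0 ≤ ∫ ω, slope ((F · ω) ∘ lineMap (X ω) (Y ω)) 0 t ∂P := by
    simp only [slope_def_field, Function.comp_apply, lineMap_apply_zero, sub_zero]
    rw [integral_div, integral_sub (hint t (Ioc_subset_Icc_self ht)) hX_int]
    exact div_nonneg (sub_nonneg.2 (hmin t ht)) ht.1.le
  have hlim : Tendsto (fun t : ℝ => ∫ ω, slope ((F · ω) ∘ lineMap (X ω) (Y ω)) 0 t ∂P)
      (𝓝[>] 0) (𝓝 (∫ ω, ⟪g ω, Y ω - X ω⟫ ∂P)) := by
    refine tendsto_integral_filter_of_dominated_convergence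
      (fun ω => |F (Y ω) ω - F (X ω) ω| + |⟪g ω, Y ω - X ω⟫|)
      (hIoc.mono fun t ht => (hslope_int t ht).aestronglyMeasurable) ?_
      ((hY_int.sub hX_int).abs.add hg.abs) ?_
    · filter_upwards [hIoc] with t ht
      filter_upwards [hF, hX, hY] with ω ⟨hconv, hgrad⟩ hXω hYω
      rw [Real.norm_eq_abs]
      exact (abs_le_max_abs_abs (hconv.inner_le_slope_comp_lineMap hgrad hXω hYω ht)
        (hconv.slope_comp_lineMap_le hXω hYω ht)).trans
        (max_le_add_of_nonneg (abs_nonneg _) (abs_nonneg _)) |>.trans_eq (add_comm _ _)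
    · filter_upwards [hF, hX, hY] with ω ⟨hconv, hgrad⟩ hXω hYω
      exact HasGradientWithinAt.tendsto_slope_comp_lineMap hgrad
        (hconv.1.mapsTo_lineMap hXω hYω)
  exact ge_of_tendsto hlim (hIoc.mono hslope_nonneg)

end Expectation

theorem Measurable.lineMap {Ω k E : Type*} {m : MeasurableSpace Ω} [Ring k] [AddCommGroup E]
    [Module k E] [MeasurableSpace E] [MeasurableAdd₂ E] [MeasurableSub₂ E]
    [MeasurableConstSMul k E] {a b : Ω → E} (ha : Measurable a) (hb : Measurable b) (t : k) :
    Measurable fun ω => lineMap (a ω) (b ω) t := by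
  simp only [lineMap_apply_module']
  fun_prop

theorem Fintype.sum_inner_update_sub {ι : Type*} [Fintype ι] [DecidableEq ι] {E : ι → Type*}
    [∀ i, NormedAddCommGroup (E i)] [∀ i, InnerProductSpace ℝ (E i)] (q x : ∀ i, E i) (i : ι)
    (v : E i) : ∑ j, ⟪q j, Function.update x i v j - x j⟫ = ⟪q i, v - x i⟫ := by
  rw [Finset.sum_eq_single i]
  · simp
  · intro j _ hj
    simp [Function.update_of_ne hj]
  · simp

namespace PiLp

variable {ι : Type*} [DecidableEq ι] {E : ι → Type*}

theorem lineMap_toLp_update [∀ i, SeminormedAddCommGroup (E i)] [∀ i, NormedSpace ℝ (E i)]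
    (x : PiLp 2 E) (i : ι) (v : E i) (t : ℝ) :
    lineMap x (WithLp.toLp 2 (Function.update x i v)) t =
      WithLp.toLp 2 (Function.update x i (lineMap (x i) v t)) := by
  ext j
  rcases eq_or_ne j i with rfl | hj
  · simp [lineMap_apply_module']
  · simp [lineMap_apply_module', Function.update_of_ne hj]

theorem inner_toLp_update_sub [Fintype ι] [∀ i, NormedAddCommGroup (E i)]
    [∀ i, InnerProductSpace ℝ (E i)] (q x : PiLp 2 E) (i : ι) (v : E i) :
    ⟪q, WithLp.toLp 2 (Function.update x i v) - x⟫ = ⟪q i, v - x i⟫ := by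
  simp only [PiLp.inner_apply, PiLp.sub_apply]
  exact Fintype.sum_inner_update_sub _ _ i v

end PiLp

section Team

variable {Ω ι : Type*} {E : ι → Type*} [∀ i, MeasurableSpace (E i)]

def IsAdmissibleProfile (G : ι → MeasurableSpace Ω) (A : ∀ i, Set (E i))
    (γ : Ω → PiLp 2 E) : Prop :=
  (∀ i, Measurable[G i] fun ω => γ ω i) ∧ ∀ ω, ∀ i, γ ω i ∈ A i

variable {G : ι → MeasurableSpace Ω} {A : ∀ i, Set (E i)} {γ : Ω → PiLp 2 E}

theorem IsAdmissibleProfile.mem_pi (hγ : IsAdmissibleProfile G A γ) (ω : Ω) :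
    γ ω ∈ WithLp.ofLp ⁻¹' univ.pi A :=
  fun i _ => hγ.2 ω i

theorem IsAdmissibleProfile.update [DecidableEq ι] (hγ : IsAdmissibleProfile G A γ) {i : ι}
    {δ : Ω → E i} (hδ : Measurable[G i] δ) (hδA : ∀ ω, δ ω ∈ A i) :
    IsAdmissibleProfile G A fun ω => WithLp.toLp 2 (Function.update (γ ω) i (δ ω)) := by
  refine ⟨fun j => ?_, fun ω j => ?_⟩ <;> rcases eq_or_ne j i with rfl | hj
  · simpa using hδ
  · simpa [Function.update_of_ne hj] using hγ.1 j
  · simpa using hδA ω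
  · simpa [Function.update_of_ne hj] using hγ.2 ω j

theorem IsAdmissibleProfile.integral_inner_nonneg_of_le_integral_update [MeasurableSpace Ω]
    {P : Measure Ω} [Fintype ι] [DecidableEq ι] [∀ i, NormedAddCommGroup (E i)]
    [∀ i, InnerProductSpace ℝ (E i)] [∀ i, CompleteSpace (E i)] [∀ i, MeasurableAdd₂ (E i)]
    [∀ i, MeasurableSub₂ (E i)] [∀ i, MeasurableConstSMul ℝ (E i)] (hA : ∀ i, Convex ℝ (A i))
    {L : PiLp 2 E → Ω → ℝ} {γo q : Ω → PiLp 2 E} (hγo : IsAdmissibleProfile G A γo)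
    (hγ : IsAdmissibleProfile G A γ)
    (hL : ∀ᵐ ω ∂P, ConvexOn ℝ (WithLp.ofLp ⁻¹' univ.pi A) (L · ω) ∧
      HasGradientWithinAt (L · ω) (q ω) (WithLp.ofLp ⁻¹' univ.pi A) (γo ω))
    (hint : ∀ γ', IsAdmissibleProfile G A γ' → Integrable (fun ω => L (γ' ω) ω) P)
    (i : ι) (hdir : Integrable (fun ω => ⟪q ω i, γ ω i - γo ω i⟫) P)
    (hpbp : ∀ δ : Ω → E i, Measurable[G i] δ → (∀ ω, δ ω ∈ A i) →
      ∫ ω, L (γo ω) ω ∂P ≤ ∫ ω, L (WithLp.toLp 2 (Function.update (γo ω) i (δ ω))) ω ∂P) :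
    0 ≤ ∫ ω, ⟪q ω i, γ ω i - γo ω i⟫ ∂P := by
  have hmeas (t : ℝ) : Measurable[G i] fun ω => lineMap (γo ω i) (γ ω i) t :=
    (hγo.1 i).lineMap (hγ.1 i) t
  have hmem {t : ℝ} (ht : t ∈ Icc 0 1) (ω : Ω) : lineMap (γo ω i) (γ ω i) t ∈ A i :=
    (hA i).lineMap_mem (hγo.2 ω i) (hγ.2 ω i) ht
  have hY := hγo.update (hγ.1 i) fun ω => hγ.2 ω i
  simpa only [PiLp.inner_toLp_update_sub] using
    integral_inner_nonneg_of_integral_le_integral_lineMap (X := γo)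
      (Y := fun ω => WithLp.toLp 2 (Function.update (γo ω) i (γ ω i)))
      hL (ae_of_all _ hγo.mem_pi) (ae_of_all _ hY.mem_pi)
      (fun t ht => by
        simpa only [PiLp.lineMap_toLp_update] using hint _ (hγo.update (hmeas t) (hmem ht)))
      (fun t ht => by
        simpa only [PiLp.lineMap_toLp_update] using
          hpbp _ (hmeas t) (hmem (Ioc_subset_Icc_self ht)))
      (by simpa only [PiLp.inner_toLp_update_sub] using hdir)

end Team

theorem static_team_pbp_implies_team_optimal
    {Ω : Type*} [MeasurableSpace Ω] (P : Measure Ω)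
    {N : ℕ} {d : Fin N → ℕ}
    (A : ∀ i, Set (EuclideanSpace ℝ (Fin (d i))))
    (hAconv : ∀ i, Convex ℝ (A i))
    (G : Fin N → MeasurableSpace Ω)
    (L : PiLp 2 (fun i => EuclideanSpace ℝ (Fin (d i))) → Ω → ℝ)
    -- admissible strategy profiles:
    (Admissible : (Ω → PiLp 2 fun i => EuclideanSpace ℝ (Fin (d i))) → Prop)
    (hAdm : ∀ γ, Admissible γ ↔
      (∀ i, Measurable[G i] fun ω => γ ω i) ∧ ∀ ω, ∀ i, γ ω i ∈ A i)
    -- a.e. joint convexity and differentiability of the cost on the product action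
    -- set, with gradient `q ω` at the point `γᵒ ω`:
    (γo : Ω → PiLp 2 fun i => EuclideanSpace ℝ (Fin (d i)))
    (q : Ω → PiLp 2 fun i => EuclideanSpace ℝ (Fin (d i)))
    (hconv : ∀ᵐ ω ∂P, ConvexOn ℝ (WithLp.ofLp ⁻¹' Set.univ.pi A) (fun u => L u ω) ∧
      DifferentiableOn ℝ (fun u => L u ω) (WithLp.ofLp ⁻¹' Set.univ.pi A) ∧
      HasGradientWithinAt (fun u => L u ω) (q ω) (WithLp.ofLp ⁻¹' Set.univ.pi A) (γo ω))
    (hγoAdm : Admissible γo)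
    -- every admissible strategy profile has integrable cost:
    (hIntAll : ∀ γ, Admissible γ → Integrable (fun ω => L (γ ω) ω) P)
    -- the directional terms are integrable:
    (hdirInt : ∀ γ, Admissible γ →
      Integrable (fun ω => ∑ i, ⟪q ω i, γ ω i - γo ω i⟫) P)
    -- person-by-person optimality of `γᵒ`:
    (hpbp : ∀ i : Fin N, ∀ γi : Ω → EuclideanSpace ℝ (Fin (d i)),
      Measurable[G i] γi → (∀ ω, γi ω ∈ A i) →
      ∫ ω, L (γo ω) ω ∂P ≤ ∫ ω, L (WithLp.toLp 2 (Function.update (γo ω) i (γi ω))) ω ∂P) :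
    -- conclusion: team optimality
    ∀ γ, Admissible γ → ∫ ω, L (γo ω) ω ∂P ≤ ∫ ω, L (γ ω) ω ∂P := by
  have hadm : ∀ γ, Admissible γ ↔ IsAdmissibleProfile G A γ := hAdm
  simp only [hadm] at hγoAdm hIntAll hdirInt ⊢
  intro γ hγ
  have hdir (i : Fin N) : Integrable (fun ω => ⟪q ω i, γ ω i - γo ω i⟫) P := by
    simpa only [PiLp.toLp_apply, Fintype.sum_inner_update_sub] using
      hdirInt _ (hγoAdm.update (hγ.1 i) fun ω => hγ.2 ω i)
  have hfoc (i : Fin N) : 0 ≤ ∫ ω, ⟪q ω i, γ ω i - γo ω i⟫ ∂P :=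
    hγoAdm.integral_inner_nonneg_of_le_integral_update hAconv hγ
      (hconv.mono fun ω h => ⟨h.1, h.2.2⟩) hIntAll i (hdir i) (hpbp i)
  have hγo_int := hIntAll γo hγoAdm
  have hgrad : ∫ ω, ∑ i, ⟪q ω i, γ ω i - γo ω i⟫ ∂P ≤
      ∫ ω, L (γ ω) ω ∂P - ∫ ω, L (γo ω) ω ∂P := by
    rw [← integral_sub (hIntAll γ hγ) hγo_int]
    refine integral_mono_ae (hdirInt γ hγ) ((hIntAll γ hγ).sub hγo_int) ?_
    filter_upwards [hconv] with ω hω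
    simpa only [PiLp.inner_apply, PiLp.sub_apply] using
      hω.1.inner_le_sub hω.2.2 (hγoAdm.mem_pi ω) (hγ.mem_pi ω)
  have hsum : 0 ≤ ∫ ω, ∑ i, ⟪q ω i, γ ω i - γo ω i⟫ ∂P := by
    rw [integral_finsetSum _ fun i _ => hdir i]
    exact Finset.sum_nonneg fun i _ => hfoc i
  linarith
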